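/- Let F be a finite polyforest with c connected components (polytrees), vertex set V and edge set E. Then the magnitude of F with respect to the Lawvere directed-path metric at parameter t satisfies Mag(F, t) = c + |E|(1 - e^{-t}), which equals |V| - |E| e^{-t}. -/

import Mathlib

open scoped Classical

/-- The Lawvere (shortest directed path) distance in a digraph with edge relation `R`:
the least length of a directed walk from `u` to `v`, and `∞` if there is none. -/
noncomputable def lawvereDist {V : Type*} (R : V → V → Prop) (u v : V) : ℕ∞ :=
  sInf {n : ℕ∞ | ∃ m : ℕ, n = (m : ℕ∞) ∧ ∃ f : Fin (m + 1) → V,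
    f 0 = u ∧ f (Fin.last m) = v ∧ ∀ i : Fin m, R (f i.castSucc) (f i.succ)}

/-- The similarity `e^{-t·d}`, with `e^{-t·∞} := 0`. -/
noncomputable def sim (t : ℝ) (d : ℕ∞) : ℝ :=
  if d = ⊤ then 0 else Real.exp (-t * d.toNat)

/-!
The weighting is `w v = 1 - e^{-t} · outdeg v`. A directed walk is a walk of the underlying
forest, so a shortest one is its unique path. Hence every vertex `x ≠ u` reachable from `u` has
exactly one in-neighbour reachable from `u`, lying at distance `d(u, x) - 1`, while `u` has none.
Therefore `∑ v, Z(u, v) e^{-t} outdeg v = ∑_{x ≠ u} Z(u, x)`, i.e. `(Z w)(u) = Z(u, u) = 1`.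
Summing `w` gives `|V| - |E| e^{-t}`, and `|V| = c + |E|` because every component of a forest is
a tree.
-/

open SimpleGraph Finset

lemma SimpleGraph.IsAcyclic.eq_of_isPath {V : Type*} {G : SimpleGraph V} (hG : G.IsAcyclic)
    {u v : V} {p q : G.Walk u v} (hp : p.IsPath) (hq : q.IsPath) : p = q :=
  Subtype.mk.inj <| (hG.subsingleton_path u v).elim ⟨p, hp⟩ ⟨q, hq⟩

lemma SimpleGraph.ConnectedComponent.degree_toSimpleGraph {V : Type*} [Fintype V]
    {G : SimpleGraph V} [DecidableRel G.Adj] (c : G.ConnectedComponent) (v : c) :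
    c.toSimpleGraph.degree v = G.degree v := by
  classical
  convert degree_induce_of_neighborSet_subset (G := G) (s := c.supp) (v := v) fun w hw =>
    (ConnectedComponent.connectedComponentMk_eq_of_adj hw).symm.trans v.2 <;> rfl

lemma SimpleGraph.IsAcyclic.card_connectedComponent_add_card_edgeFinset {V : Type*} [Fintype V]
    {G : SimpleGraph V} [DecidableRel G.Adj] (hG : G.IsAcyclic) :
    Nat.card G.ConnectedComponent + #G.edgeFinset = Fintype.card V := by
  classical
  have hcomp (c : G.ConnectedComponent) :
      2 + ∑ v with G.connectedComponentMk v = c, G.degree v =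
        2 * #{v | G.connectedComponentMk v = c} := by
    -- the handshake lemma and `|E| + 1 = |V|` in the tree `c`, transported to sums over `V`
    have hsub (f : V → ℕ) : ∑ v with G.connectedComponentMk v = c, f v = ∑ v : c, f v :=
      sum_subtype _ (fun v => by simp only [mem_filter, mem_univ, true_and]; exact Iff.rfl) f
    rw [hsub, card_eq_sum_ones, hsub, ← Fintype.card_eq_sum_ones,
      ← (hG.isTree_connectedComponent c).card_edgeFinset,
      ← Fintype.sum_congr _ _ c.degree_toSimpleGraph, sum_degrees_eq_twice_card_edges]
    ring
  have hdeg : ∑ c, ∑ v with G.connectedComponentMk v = c, G.degree v = 2 * #G.edgeFinset := by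
    rw [← sum_degrees_eq_twice_card_edges]
    convert sum_fiberwise univ G.connectedComponentMk _
  have hcard : ∑ c, #{v | G.connectedComponentMk v = c} = Fintype.card V := by
    simp only [card_eq_sum_ones, Fintype.card_eq_sum_ones]
    convert sum_fiberwise univ G.connectedComponentMk _
  have hsum := Fintype.sum_congr _ _ hcomp
  rw [sum_add_distrib, ← mul_sum, hdeg, hcard, sum_const, card_univ, smul_eq_mul] at hsum
  rw [Nat.card_eq_fintype_card]
  omega

lemma SimpleGraph.fromRel_adj_of_rel {V : Type*} {R : V → V → Prop} (hirr : ∀ v, ¬ R v v)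
    {u v : V} (h : R u v) : (fromRel R).Adj u v :=
  (fromRel_adj _ _ _).2 ⟨fun huv => hirr u (huv ▸ h), Or.inl h⟩

lemma SimpleGraph.card_edgeFinset_fromRel {V : Type*} [Fintype V] {R : V → V → Prop}
    (hasymm : ∀ u v, R u v → ¬ R v u) :
    #(fromRel R).edgeFinset = #{p : V × V | R p.1 p.2} := by
  have hadj : (univ.filter fun (x, y) => (fromRel R).Adj x y) =
      (univ.filter fun p : V × V => R p.1 p.2) ∪ univ.filter fun p : V × V => R p.2 p.1 := by
    ext ⟨x, y⟩
    simp only [fromRel_adj, mem_filter, mem_univ, true_and, mem_union, and_iff_right_iff_imp]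
    rintro h rfl
    exact h.elim (fun h => hasymm x x h h) (fun h => hasymm x x h h)
  have hswap : #{p : V × V | R p.2 p.1} = #{p : V × V | R p.1 p.2} :=
    card_nbij' Prod.swap Prod.swap (fun p hp => by simpa using hp) (fun p hp => by simpa using hp)
      (fun p _ => p.swap_swap) (fun p _ => p.swap_swap)
  have := (fromRel R).two_mul_card_edgeFinset
  rw [hadj, card_union_of_disjoint (disjoint_filter.2 fun p _ h => hasymm _ _ h), hswap] at this
  omega

namespace SimpleGraph.Walk

variable {V : Type*} {R : V → V → Prop} {u v w : V}

def IsDirected (p : (fromRel R).Walk u v) : Prop :=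
  ∀ d ∈ p.darts, R d.fst d.snd

lemma isDirected_nil : (nil : (fromRel R).Walk u u).IsDirected := by
  simp [Walk.IsDirected]

lemma isDirected_cons {h : (fromRel R).Adj u v} {p : (fromRel R).Walk v w} :
    (cons h p).IsDirected ↔ R u v ∧ p.IsDirected := by
  simp [Walk.IsDirected]

lemma isDirected_concat {p : (fromRel R).Walk u v} {h : (fromRel R).Adj v w} :
    (p.concat h).IsDirected ↔ p.IsDirected ∧ R v w := by
  simp [Walk.IsDirected, or_imp, forall_and]

lemma IsDirected.mono {x y : V} {p : (fromRel R).Walk u v} {q : (fromRel R).Walk x y}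
    (hp : p.IsDirected) (h : q.darts ⊆ p.darts) : q.IsDirected :=
  fun d hd => hp d (h hd)

lemma IsDirected.rel_getVert {p : (fromRel R).Walk u v} (hp : p.IsDirected) {i : ℕ}
    (hi : i < p.length) : R (p.getVert i) (p.getVert (i + 1)) := by
  have := hp _ (List.getElem_mem (l := p.darts) (by simpa using hi))
  rwa [darts_getElem_eq_getVert] at this

lemma exists_isDirected_of_chain (hirr : ∀ v, ¬ R v v) {m : ℕ} (f : Fin (m + 1) → V)
    (hu : f 0 = u) (hv : f (Fin.last m) = v) (hf : ∀ i : Fin m, R (f i.castSucc) (f i.succ)) :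
    ∃ p : (fromRel R).Walk u v, p.IsDirected ∧ p.length = m := by
  induction m generalizing u with
  | zero =>
    obtain rfl : u = v := hu.symm.trans hv
    exact ⟨nil, isDirected_nil, rfl⟩
  | succ m ih =>
    obtain ⟨p, hp, hlen⟩ := ih (fun i => f i.succ) rfl hv fun i => hf i.succ
    have h0 : R u (f (Fin.succ 0)) := hu ▸ hf 0
    exact ⟨cons (fromRel_adj_of_rel hirr h0) p, isDirected_cons.2 ⟨h0, hp⟩,
      by rw [length_cons, hlen]⟩

end SimpleGraph.Walk

section LawvereDist

open Walk

variable {V : Type*} {R : V → V → Prop} {u v w : V}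

lemma lawvereDist_le_length {p : (fromRel R).Walk u v} (hp : p.IsDirected) :
    lawvereDist R u v ≤ p.length :=
  sInf_le ⟨p.length, rfl, fun i => p.getVert i, p.getVert_zero, p.getVert_length,
    fun i => hp.rel_getVert i.isLt⟩

lemma lawvereDist_ne_top_of_isDirected {p : (fromRel R).Walk u v} (hp : p.IsDirected) :
    lawvereDist R u v ≠ ⊤ :=
  ne_top_of_le_ne_top (ENat.natCast_ne_top _) (lawvereDist_le_length hp)

lemma lawvereDist_self (R : V → V → Prop) (u : V) : lawvereDist R u u = 0 :=
  nonpos_iff_eq_zero.1 (lawvereDist_le_length (isDirected_nil (u := u)))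

lemma exists_isPath_isDirected_of_lawvereDist_eq (hirr : ∀ v, ¬ R v v) {n : ℕ}
    (h : lawvereDist R u v = n) :
    ∃ p : (fromRel R).Walk u v, p.IsPath ∧ p.IsDirected ∧ p.length = n := by
  unfold lawvereDist at h
  obtain ⟨m, hm, f, hu, hv, hf⟩ :=
    h ▸ csInf_mem (Set.nonempty_iff_ne_empty.2 fun he => by simp [he] at h)
  obtain rfl : n = m := by exact_mod_cast hm
  obtain ⟨p, hp, rfl⟩ := exists_isDirected_of_chain hirr f hu hv hf
  -- `bypass` only deletes darts, so it stays directed and cannot beat the minimal length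
  have hbp : p.bypass.IsDirected := hp.mono p.darts_bypass_subset_darts
  refine ⟨p.bypass, p.bypass_isPath, hbp, le_antisymm p.length_bypass_le_length ?_⟩
  exact_mod_cast h.symm.trans_le (lawvereDist_le_length hbp)

lemma exists_isPath_isDirected_of_lawvereDist_ne_top (hirr : ∀ v, ¬ R v v)
    (h : lawvereDist R u v ≠ ⊤) : ∃ p : (fromRel R).Walk u v, p.IsPath ∧ p.IsDirected := by
  obtain ⟨n, hn⟩ := ENat.ne_top_iff_exists.1 h
  obtain ⟨p, hp, hd, -⟩ := exists_isPath_isDirected_of_lawvereDist_eq hirr hn.symm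
  exact ⟨p, hp, hd⟩

lemma exists_rel_of_lawvereDist_ne_top (hirr : ∀ v, ¬ R v v) (h : lawvereDist R u w ≠ ⊤)
    (hw : w ≠ u) : ∃ v, R v w ∧ lawvereDist R u v ≠ ⊤ := by
  obtain ⟨p, -, hd⟩ := exists_isPath_isDirected_of_lawvereDist_ne_top hirr h
  have hp : ¬ p.Nil := fun hnil => hw hnil.eq.symm
  refine ⟨p.penultimate, hd _ (p.lastDart_mem_darts hp),
    lawvereDist_ne_top_of_isDirected (p := p.dropLast) ?_⟩
  exact hd.mono (by simpa only [darts_dropLast] using List.dropLast_subset _)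

end LawvereDist

structure IsPolyforest {V : Type*} (R : V → V → Prop) : Prop where
  asymm : ∀ u v, R u v → ¬ R v u
  isAcyclic : (fromRel R).IsAcyclic

namespace IsPolyforest

open Walk

variable {V : Type*} {R : V → V → Prop} {u v w : V}

lemma irrefl (hR : IsPolyforest R) (v : V) : ¬ R v v := fun h => hR.asymm v v h h

lemma lawvereDist_eq_length (hR : IsPolyforest R) {p : (fromRel R).Walk u v} (hp : p.IsPath)
    (hd : p.IsDirected) : lawvereDist R u v = p.length := by
  obtain ⟨n, hn⟩ := ENat.ne_top_iff_exists.1 (lawvereDist_ne_top_of_isDirected hd)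
  obtain ⟨q, hq, -, rfl⟩ := exists_isPath_isDirected_of_lawvereDist_eq hR.irrefl hn.symm
  rw [← hn, hR.isAcyclic.eq_of_isPath hq hp]

lemma not_rel_of_lawvereDist_ne_top (hR : IsPolyforest R) (h : lawvereDist R u v ≠ ⊤) :
    ¬ R v u := by
  intro hr
  obtain ⟨p, hp, hd⟩ := exists_isPath_isDirected_of_lawvereDist_ne_top hR.irrefl h
  have hadj : (fromRel R).Adj u v := (fromRel_adj_of_rel hR.irrefl hr).symm
  obtain rfl : p = cons hadj nil := hR.isAcyclic.eq_of_isPath hp (Path.singleton hadj).2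
  exact hR.asymm v u hr (isDirected_cons.1 hd).1

lemma isPath_concat_of_rel (hR : IsPolyforest R) {p : (fromRel R).Walk u v} (hp : p.IsPath)
    (hd : p.IsDirected) (hr : R v w) : (p.concat (fromRel_adj_of_rel hR.irrefl hr)).IsPath :=
  -- were `w` on `p`, the rest of `p` would be a directed walk `w → v`, which `R v w` forbids
  hp.concat (fun hw => hR.not_rel_of_lawvereDist_ne_top
    (lawvereDist_ne_top_of_isDirected (hd.mono (p.darts_dropUntil_subset_darts hw))) hr) _

lemma lawvereDist_eq_add_one_of_rel (hR : IsPolyforest R) {n : ℕ} (h : lawvereDist R u v = n)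
    (hr : R v w) : lawvereDist R u w = (n + 1 : ℕ) := by
  obtain ⟨p, hp, hd, rfl⟩ := exists_isPath_isDirected_of_lawvereDist_eq hR.irrefl h
  rw [hR.lawvereDist_eq_length (hR.isPath_concat_of_rel hp hd hr)
    (isDirected_concat.2 ⟨hd, hr⟩), length_concat]

lemma eq_of_rel_of_rel (hR : IsPolyforest R) {v₁ v₂ : V} (h₁ : lawvereDist R u v₁ ≠ ⊤)
    (h₂ : lawvereDist R u v₂ ≠ ⊤) (hr₁ : R v₁ w) (hr₂ : R v₂ w) : v₁ = v₂ := by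
  obtain ⟨p₁, hp₁, hd₁⟩ := exists_isPath_isDirected_of_lawvereDist_ne_top hR.irrefl h₁
  obtain ⟨p₂, hp₂, hd₂⟩ := exists_isPath_isDirected_of_lawvereDist_ne_top hR.irrefl h₂
  exact (concat_inj (hR.isAcyclic.eq_of_isPath (hR.isPath_concat_of_rel hp₁ hd₁ hr₁)
    (hR.isPath_concat_of_rel hp₂ hd₂ hr₂))).1

lemma card_filter_rel_lawvereDist_ne_top [Fintype V] (hR : IsPolyforest R)
    (h : lawvereDist R u w ≠ ⊤) :
    #{v | R v w ∧ lawvereDist R u v ≠ ⊤} = if w = u then 0 else 1 := by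
  split_ifs with hw
  · subst hw
    exact card_eq_zero.2 (filter_eq_empty_iff.2 fun v _ ⟨hr, hv⟩ =>
      hR.not_rel_of_lawvereDist_ne_top hv hr)
  · obtain ⟨v₀, hr₀, h₀⟩ := exists_rel_of_lawvereDist_ne_top hR.irrefl h hw
    refine card_eq_one.2 ⟨v₀, eq_singleton_iff_unique_mem.2 ⟨by simp [hr₀, h₀], ?_⟩⟩
    rintro v hv
    simp only [mem_filter, mem_univ, true_and] at hv
    exact hR.eq_of_rel_of_rel hv.2 h₀ hv.1 hr₀

lemma card_connectedComponent_add_card_rel [Fintype V] (hR : IsPolyforest R) :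
    Nat.card (fromRel R).ConnectedComponent + #{p : V × V | R p.1 p.2} = Fintype.card V := by
  rw [← card_edgeFinset_fromRel hR.asymm]
  exact hR.isAcyclic.card_connectedComponent_add_card_edgeFinset

end IsPolyforest

lemma sim_top (t : ℝ) : sim t ⊤ = 0 := if_pos rfl

lemma sim_zero (t : ℝ) : sim t 0 = 1 := by
  simp [sim]

lemma sim_natCast (t : ℝ) (n : ℕ) : sim t n = Real.exp (-t * n) := by
  simp [sim]

noncomputable def outdegreeWeighting {V : Type*} [Fintype V] (R : V → V → Prop) (t : ℝ)
    (v : V) : ℝ :=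
  1 - Real.exp (-t) * #{x | R v x}

lemma sum_outdegreeWeighting {V : Type*} [Fintype V] (R : V → V → Prop) (t : ℝ) :
    ∑ v, outdegreeWeighting R t v =
      Fintype.card V - #{p : V × V | R p.1 p.2} * Real.exp (-t) := by
  have hout : ∑ v, #{x | R v x} = #{p : V × V | R p.1 p.2} := by
    rw [card_filter, Fintype.sum_prod_type]
    exact sum_congr rfl fun v _ => card_filter _ _
  simp only [outdegreeWeighting, sum_sub_distrib, ← mul_sum, sum_const, card_univ, nsmul_eq_mul,
    mul_one]
  rw [← Nat.cast_sum, hout, mul_comm]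

namespace IsPolyforest

variable {V : Type*} [Fintype V] {R : V → V → Prop}

lemma sum_ite_rel_sim_mul_exp (hR : IsPolyforest R) (t : ℝ) (u x : V) :
    ∑ v, (if R v x then sim t (lawvereDist R u v) * Real.exp (-t) else 0) =
      sim t (lawvereDist R u x) - if x = u then 1 else 0 := by
  have hterm (v : V) : (if R v x then sim t (lawvereDist R u v) * Real.exp (-t) else 0) =
      if R v x ∧ lawvereDist R u v ≠ ⊤ then sim t (lawvereDist R u x) else 0 := by
    by_cases hr : R v x
    · by_cases hv : lawvereDist R u v = ⊤
      · simp [hv, sim_top]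
      · obtain ⟨n, hn⟩ := ENat.ne_top_iff_exists.1 hv
        rw [if_pos hr, if_pos ⟨hr, hv⟩, hR.lawvereDist_eq_add_one_of_rel hn.symm hr, ← hn,
          sim_natCast, sim_natCast, ← Real.exp_add]
        push_cast
        ring_nf
    · simp [hr]
  rw [sum_congr rfl fun v _ => hterm v, ← sum_filter, sum_const, nsmul_eq_mul]
  by_cases hx : lawvereDist R u x = ⊤
  · have hxu : x ≠ u := fun h => by simp [h, lawvereDist_self] at hx
    simp [hx, sim_top, hxu]
  · rw [hR.card_filter_rel_lawvereDist_ne_top hx]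
    split_ifs with hxu
    · simp [hxu, lawvereDist_self, sim_zero]
    · simp

lemma sum_sim_mul_outdegreeWeighting (hR : IsPolyforest R) (t : ℝ) (u : V) :
    ∑ v, sim t (lawvereDist R u v) * outdegreeWeighting R t v = 1 := by
  have hrow (v : V) : sim t (lawvereDist R u v) * outdegreeWeighting R t v =
      sim t (lawvereDist R u v) -
        ∑ x, if R v x then sim t (lawvereDist R u v) * Real.exp (-t) else 0 := by
    rw [← sum_filter, sum_const, nsmul_eq_mul, outdegreeWeighting]
    ring
  rw [sum_congr rfl fun v _ => hrow v, sum_sub_distrib, sum_comm,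
    sum_congr rfl fun x _ => hR.sum_ite_rel_sim_mul_exp t u x, sum_sub_distrib, sum_ite_eq']
  simp

end IsPolyforest

theorem polyforest_magnitude_components_general {V : Type*} [Fintype V]
    (R : V → V → Prop)
    (hasymm : ∀ u v, R u v → ¬ R v u)
    (hforest : (SimpleGraph.fromRel R).IsAcyclic)
    (t : ℝ) :
    ∃ w : V → ℝ,
      (∀ u, ∑ v, sim t (lawvereDist R u v) * w v = 1) ∧
      ∑ v, w v = (Nat.card (SimpleGraph.fromRel R).ConnectedComponent : ℝ) +
        ((Finset.univ.filter fun p : V × V => R p.1 p.2).card : ℝ) * (1 - Real.exp (-t)) ∧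
      (Nat.card (SimpleGraph.fromRel R).ConnectedComponent : ℝ) +
        ((Finset.univ.filter fun p : V × V => R p.1 p.2).card : ℝ) * (1 - Real.exp (-t)) =
      (Fintype.card V : ℝ) -
        ((Finset.univ.filter fun p : V × V => R p.1 p.2).card : ℝ) * Real.exp (-t) := by
  have hR : IsPolyforest R := ⟨hasymm, hforest⟩
  have hcard : (Fintype.card V : ℝ) =
      Nat.card (fromRel R).ConnectedComponent + #{p : V × V | R p.1 p.2} := by
    exact_mod_cast hR.card_connectedComponent_add_card_rel.symm
  have hmag : (Nat.card (fromRel R).ConnectedComponent : ℝ) +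
      #{p : V × V | R p.1 p.2} * (1 - Real.exp (-t)) =
      Fintype.card V - #{p : V × V | R p.1 p.2} * Real.exp (-t) := by
    rw [hcard]
    ring
  exact ⟨outdegreeWeighting R t, hR.sum_sim_mul_outdegreeWeighting t,
    (sum_outdegreeWeighting R t).trans hmag.symm, hmag⟩

/-- A finite polyforest with `c` connected components, vertex set `V` and edge set `E`, has
Lawvere-metric magnitude `Mag(F,t) = c + |E|(1 - e^{-t})`, which equals `|V| - |E| e^{-t}`. -/
theorem polyforest_magnitude_components {V : Type*} [Fintype V] [DecidableEq V]
    (R : V → V → Prop)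
    (hirr : ∀ v, ¬ R v v) (hasymm : ∀ u v, R u v → ¬ R v u)
    (hforest : (SimpleGraph.fromRel R).IsAcyclic)
    (t : ℝ) (ht : 0 < t) :
    ∃ w : V → ℝ,
      (∀ u, ∑ v, sim t (lawvereDist R u v) * w v = 1) ∧
      ∑ v, w v = (Nat.card (SimpleGraph.fromRel R).ConnectedComponent : ℝ) +
        ((Finset.univ.filter fun p : V × V => R p.1 p.2).card : ℝ) * (1 - Real.exp (-t)) ∧
      (Nat.card (SimpleGraph.fromRel R).ConnectedComponent : ℝ) +
        ((Finset.univ.filter fun p : V × V => R p.1 p.2).card : ℝ) * (1 - Real.exp (-t)) =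
      (Fintype.card V : ℝ) -
        ((Finset.univ.filter fun p : V × V => R p.1 p.2).card : ℝ) * Real.exp (-t) :=
  polyforest_magnitude_components_general R hasymm hforest t
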